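/- (Hoeffding-type concentration in Hilbert space.) Let H be a separable real Hilbert space, (Ω, F, P) a probability space, n ≥ 1, and ξ₁, ..., ξₙ : Ω → H independent identically distributed Bochner-integrable random vectors with ‖ξᵢ‖ ≤ M almost surely for some M > 0. Then for every ε > 0, P( ‖(1/n)Σᵢ ξᵢ − E[ξ₁]‖ ≥ ε ) ≤ 2·exp( −n ε² / (8M²) ). -/

import Mathlib

/-!
In a Hilbert space `‖u ± v‖² = ‖u‖² + ‖v‖² ± 2⟪u, v⟫` with `|2⟪u, v⟫| ≤ 2‖u‖‖v‖`; comparing the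
even power series of `cosh` termwise gives `cosh ‖u + v‖ + cosh ‖u - v‖ ≤ 2 cosh ‖u‖ cosh ‖v‖`.
Averaging over a symmetric increment `D` with `‖D‖ ≤ b`, independent of `S`, this yields
`E cosh ‖S + D‖ ≤ cosh b · E cosh ‖S‖`, so `E cosh ‖∑ Dᵢ‖ ≤ ∏ cosh bᵢ` for independent symmetric
bounded `Dᵢ`. Jensen's inequality for the convex function `cosh ‖·‖` against an independent copy
`ξ'` bounds `E cosh (λ ‖∑ (ξᵢ - E ξᵢ)‖)` by the same quantity for `Dᵢ = λ (ξᵢ - ξ'ᵢ)`, which are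
symmetric and bounded by `2λM`, hence by `cosh (2λM) ^ n ≤ exp (2nλ²M²)`. Markov's inequality
with `cosh (λt) ≥ exp (λt) / 2` and the choice `λ = t / (4nM²)` gives `2 exp (-t² / (8nM²))`.
-/

open MeasureTheory ProbabilityTheory Real

lemma pow_add_neg_pow_le_of_abs_le {x y : ℝ} (h : |x| ≤ y) (m : ℕ) :
    x ^ m + (-x) ^ m ≤ y ^ m + (-y) ^ m := by
  rcases Nat.even_or_odd m with hm | hm
  · have : x ^ m ≤ y ^ m :=
      (le_abs_self _).trans ((abs_pow x m).le.trans (pow_le_pow_left₀ (abs_nonneg x) h m))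
    rw [hm.neg_pow, hm.neg_pow]
    linarith
  · simp [hm.neg_pow]

lemma add_pow_add_sub_pow_le {A x y : ℝ} (hA : 0 ≤ A) (h : |x| ≤ y) (k : ℕ) :
    (A + x) ^ k + (A - x) ^ k ≤ (A + y) ^ k + (A - y) ^ k := by
  simp only [sub_eq_add_neg, add_pow, ← Finset.sum_add_distrib, ← add_mul, ← mul_add]
  exact Finset.sum_le_sum fun j _ => mul_le_mul_of_nonneg_right
    (mul_le_mul_of_nonneg_left (pow_add_neg_pow_le_of_abs_le h _) (pow_nonneg hA _))
    (Nat.cast_nonneg _)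

lemma cosh_add_cosh_le_of_sq_eq {a b c d A x y : ℝ} (hA : 0 ≤ A) (h : |x| ≤ y)
    (ha : a ^ 2 = A + x) (hb : b ^ 2 = A - x) (hc : c ^ 2 = A + y) (hd : d ^ 2 = A - y) :
    cosh a + cosh b ≤ cosh c + cosh d := by
  refine hasSum_le (fun k => ?_) ((hasSum_cosh a).add (hasSum_cosh b))
    ((hasSum_cosh c).add (hasSum_cosh d))
  rw [← add_div, ← add_div, pow_mul, pow_mul, pow_mul, pow_mul, ha, hb, hc, hd]
  exact div_le_div_of_nonneg_right (add_pow_add_sub_pow_le hA h k) (by positivity)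

lemma cosh_norm_add_add_cosh_norm_sub_le {E : Type*} [NormedAddCommGroup E]
    [InnerProductSpace ℝ E] (u v : E) :
    cosh ‖u + v‖ + cosh ‖u - v‖ ≤ 2 * cosh ‖u‖ * cosh ‖v‖ := by
  have hinner : |2 * inner ℝ u v| ≤ 2 * (‖u‖ * ‖v‖) := by
    rw [abs_mul, abs_two]
    gcongr
    exact abs_real_inner_le_norm u v
  have key := cosh_add_cosh_le_of_sq_eq (a := ‖u + v‖) (b := ‖u - v‖) (c := ‖u‖ + ‖v‖)
    (d := ‖u‖ - ‖v‖) (A := ‖u‖ ^ 2 + ‖v‖ ^ 2) (by positivity) hinner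
    (by rw [norm_add_sq_real]; ring) (by rw [norm_sub_sq_real]; ring) (by ring) (by ring)
  rw [cosh_add, cosh_sub] at key
  linarith

lemma convexOn_cosh : ConvexOn ℝ Set.univ cosh := by
  have hneg : ConvexOn ℝ Set.univ fun x : ℝ => exp (-x) := by
    simpa [Function.comp_def] using convexOn_exp.comp_linearMap (-LinearMap.id)
  have hcosh : cosh = fun x => (2 : ℝ)⁻¹ • (exp x + exp (-x)) := by
    ext x
    rw [cosh_eq, smul_eq_mul]
    ring
  rw [hcosh]
  exact (convexOn_exp.add hneg).smul (by norm_num)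

lemma convexOn_cosh_norm {E : Type*} [SeminormedAddCommGroup E] [NormedSpace ℝ E] :
    ConvexOn ℝ Set.univ fun v : E => cosh ‖v‖ :=
  ⟨convex_univ, fun _ _ _ _ _ _ ha hb hab =>
    (cosh_le_cosh.2 (abs_le_abs_of_nonneg (norm_nonneg _)
      (convexOn_univ_norm.2 trivial trivial ha hb hab))).trans
      (convexOn_cosh.2 trivial trivial ha hb hab)⟩

lemma integrable_cosh_norm_of_ae_norm_le {α E : Type*} [MeasurableSpace α] {μ : Measure α}
    [IsFiniteMeasure μ] [NormedAddCommGroup E] [MeasurableSpace E] [OpensMeasurableSpace E]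
    {f : α → E} (hf : AEMeasurable f μ) {C : ℝ} (hC : ∀ᵐ a ∂μ, ‖f a‖ ≤ C) :
    Integrable (fun a => cosh ‖f a‖) μ :=
  .of_bound (continuous_cosh.measurable.comp_aemeasurable hf.norm).aestronglyMeasurable
    (cosh C) <| by
    filter_upwards [hC] with a ha
    rw [norm_of_nonneg (cosh_pos _).le]
    exact cosh_le_cosh.2 (abs_le_abs_of_nonneg (norm_nonneg _) ha)

lemma ProbabilityTheory.iIndepFun.prod {ι Ω Ω' β γ : Type*} [Fintype ι] [MeasurableSpace Ω]
    [MeasurableSpace Ω'] [MeasurableSpace β] [MeasurableSpace γ] {μ : Measure Ω} {ν : Measure Ω'}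
    [IsProbabilityMeasure μ] [IsProbabilityMeasure ν] {f : ι → Ω → β} {g : ι → Ω' → γ}
    (hfi : iIndepFun f μ) (hgi : iIndepFun g ν) (hf : ∀ i, Measurable (f i))
    (hg : ∀ i, Measurable (g i)) :
    iIndepFun (fun i p => (f i p.1, g i p.2)) (μ.prod ν) := by
  have hF : Measurable fun ω i => f i ω := measurable_pi_lambda _ hf
  have hG : Measurable fun ω i => g i ω := measurable_pi_lambda _ hg
  rw [iIndepFun_iff_map_fun_eq_pi_map fun i => (by fun_prop :
    Measurable fun p : Ω × Ω' => (f i p.1, g i p.2)).aemeasurable]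
  have hsplit : (fun (p : Ω × Ω') i => (f i p.1, g i p.2)) =
      (MeasurableEquiv.arrowProdEquivProdArrow β γ ι).symm ∘
        Prod.map (fun ω i => f i ω) (fun ω i => g i ω) := rfl
  rw [hsplit, ← Measure.map_map (MeasurableEquiv.measurable _) (hF.prodMap hG),
    ← Measure.map_prod_map _ _ hF hG, hfi.map_fun_eq_pi_map fun i => (hf i).aemeasurable,
    hgi.map_fun_eq_pi_map fun i => (hg i).aemeasurable,
    (measurePreserving_arrowProdEquivProdArrow β γ ι _ _).symm.map_eq]
  congr with i : 1
  exact Measure.map_prod_map _ _ (hf i) (hg i)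

section Symmetric

variable {E : Type*} [NormedAddCommGroup E] [InnerProductSpace ℝ E] [MeasurableSpace E]
  [BorelSpace E]

lemma integral_cosh_norm_add_le (ν : Measure E) [IsProbabilityMeasure ν] [ν.IsNegInvariant]
    {b : ℝ} (hb : ∀ᵐ v ∂ν, ‖v‖ ≤ b) (u : E) :
    ∫ v, cosh ‖u + v‖ ∂ν ≤ cosh ‖u‖ * cosh b := by
  have hint : Integrable (fun v => cosh ‖u + v‖) ν :=
    integrable_cosh_norm_of_ae_norm_le (C := ‖u‖ + b)
      (measurable_const_add u).aemeasurable <| by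
      filter_upwards [hb] with v hv
      exact (norm_add_le _ _).trans (by linarith)
  have hint' : Integrable (fun v => cosh ‖u - v‖) ν := by
    simpa [sub_eq_add_neg] using hint.comp_neg
  have hsymm : ∫ v, cosh ‖u - v‖ ∂ν = ∫ v, cosh ‖u + v‖ ∂ν := by
    simpa [sub_eq_add_neg] using integral_neg_eq_self (fun v => cosh ‖u + v‖) ν
  have hpair : ∫ v, (cosh ‖u + v‖ + cosh ‖u - v‖) ∂ν ≤ 2 * cosh ‖u‖ * cosh b := by
    refine (integral_mono_ae (hint.add hint') (integrable_const (2 * cosh ‖u‖ * cosh b))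
      ?_).trans_eq (by simp)
    filter_upwards [hb] with v hv
    refine (cosh_norm_add_add_cosh_norm_sub_le u v).trans ?_
    gcongr
    exact cosh_le_cosh.2 (by rw [abs_norm]; exact hv.trans (le_abs_self b))
  rw [integral_add hint hint', hsymm] at hpair
  linarith

variable [SecondCountableTopology E] {Ω : Type*} [MeasurableSpace Ω] {μ : Measure Ω}
  [IsProbabilityMeasure μ]

lemma integral_cosh_norm_add_le_of_indepFun {A B : Ω → E} (hA : Measurable A)
    (hB : Measurable B) (hAB : IndepFun A B μ) (hsymm : μ.map (-B) = μ.map B) {a b : ℝ}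
    (ha : ∀ᵐ ω ∂μ, ‖A ω‖ ≤ a) (hb : ∀ᵐ ω ∂μ, ‖B ω‖ ≤ b) :
    ∫ ω, cosh ‖A ω + B ω‖ ∂μ ≤ (∫ ω, cosh ‖A ω‖ ∂μ) * cosh b := by
  have := Measure.isProbabilityMeasure_map (μ := μ) hA.aemeasurable
  have := Measure.isProbabilityMeasure_map (μ := μ) hB.aemeasurable
  have : (μ.map B).IsNegInvariant := ⟨by rwa [Measure.neg, Measure.map_map measurable_neg hB]⟩
  have hlaw : μ.map (fun ω => (A ω, B ω)) = (μ.map A).prod (μ.map B) :=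
    (indepFun_iff_map_prod_eq_prod_map_map hA.aemeasurable hB.aemeasurable).1 hAB
  have ha' : ∀ᵐ u ∂μ.map A, ‖u‖ ≤ a :=
    (ae_map_iff hA.aemeasurable (measurableSet_le measurable_norm measurable_const)).2 ha
  have hb' : ∀ᵐ v ∂μ.map B, ‖v‖ ≤ b :=
    (ae_map_iff hB.aemeasurable (measurableSet_le measurable_norm measurable_const)).2 hb
  have hab : ∀ᵐ q ∂(μ.map A).prod (μ.map B), ‖q.1 + q.2‖ ≤ a + b := by
    rw [← hlaw, ae_map_iff (hA.prodMk hB).aemeasurable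
      (measurableSet_le (by fun_prop : Measurable fun q : E × E => ‖q.1 + q.2‖)
        measurable_const)]
    filter_upwards [ha, hb] with ω hωa hωb
    exact (norm_add_le _ _).trans (add_le_add hωa hωb)
  have hint := integrable_cosh_norm_of_ae_norm_le (by fun_prop) hab
  calc ∫ ω, cosh ‖A ω + B ω‖ ∂μ = ∫ q, cosh ‖q.1 + q.2‖ ∂(μ.map A).prod (μ.map B) := by
        rw [← hlaw, integral_map (hA.prodMk hB).aemeasurable (by fun_prop)]
    _ = ∫ u, ∫ v, cosh ‖u + v‖ ∂μ.map B ∂μ.map A := integral_prod _ hint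
    _ ≤ ∫ u, cosh ‖u‖ * cosh b ∂μ.map A :=
        integral_mono hint.integral_prod_left
          ((integrable_cosh_norm_of_ae_norm_le aemeasurable_id ha').mul_const _)
          fun u => integral_cosh_norm_add_le _ hb' u
    _ = (∫ ω, cosh ‖A ω‖ ∂μ) * cosh b := by
        rw [integral_mul_const, integral_map hA.aemeasurable (by fun_prop)]

lemma integral_cosh_norm_sum_le {ι : Type*} {X : ι → Ω → E}
    (hX : ∀ i, Measurable (X i)) (hindep : iIndepFun X μ)
    (hsymm : ∀ i, μ.map (-X i) = μ.map (X i)) {b : ι → ℝ} (hb : ∀ i, ∀ᵐ ω ∂μ, ‖X i ω‖ ≤ b i)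
    (s : Finset ι) :
    ∫ ω, cosh ‖∑ i ∈ s, X i ω‖ ∂μ ≤ ∏ i ∈ s, cosh (b i) := by
  classical
  induction s using Finset.induction_on with
  | empty => simp
  | insert k t hk ih =>
    have hsum : ∀ᵐ ω ∂μ, ‖(∑ i ∈ t, X i) ω‖ ≤ ∑ i ∈ t, b i := by
      filter_upwards [(Filter.eventually_all_finset t).2 fun i _ => hb i] with ω hω
      rw [Finset.sum_apply]
      exact (norm_sum_le _ _).trans (Finset.sum_le_sum hω)
    calc ∫ ω, cosh ‖∑ i ∈ insert k t, X i ω‖ ∂μ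
        = ∫ ω, cosh ‖(∑ i ∈ t, X i) ω + X k ω‖ ∂μ := by
          simp only [Finset.sum_insert hk, Finset.sum_apply, add_comm]
      _ ≤ (∫ ω, cosh ‖(∑ i ∈ t, X i) ω‖ ∂μ) * cosh (b k) :=
          integral_cosh_norm_add_le_of_indepFun
            (Finset.sum_fn t X ▸ t.measurable_sum fun i _ => hX i) (hX k)
            (hindep.indepFun_finsetSum_of_notMem hX hk) (hsymm k) hsum (hb k)
      _ ≤ (∏ i ∈ t, cosh (b i)) * cosh (b k) := by
          gcongr
          simpa only [Finset.sum_apply] using ih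
      _ = ∏ i ∈ insert k t, cosh (b i) := by rw [Finset.prod_insert hk, mul_comm]

end Symmetric

lemma integral_cosh_norm_sub_integral_le {E : Type*} [NormedAddCommGroup E] [NormedSpace ℝ E]
    [CompleteSpace E] [SecondCountableTopology E] [MeasurableSpace E] [BorelSpace E]
    {Ω : Type*} [MeasurableSpace Ω] {μ : Measure Ω} [IsProbabilityMeasure μ]
    {Y : Ω → E} (hY : Measurable Y) {C : ℝ} (hC : ∀ᵐ ω ∂μ, ‖Y ω‖ ≤ C) :
    ∫ ω, cosh ‖Y ω - ∫ ω', Y ω' ∂μ‖ ∂μ ≤ ∫ p, cosh ‖Y p.1 - Y p.2‖ ∂μ.prod μ := by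
  have hYint : Integrable Y μ := .of_bound hY.aestronglyMeasurable C hC
  have hdiff : ∀ᵐ p ∂μ.prod μ, ‖Y p.1 - Y p.2‖ ≤ C + C := by
    filter_upwards [Measure.quasiMeasurePreserving_fst.ae hC,
      Measure.quasiMeasurePreserving_snd.ae hC] with p h₁ h₂
    exact (norm_sub_le _ _).trans (add_le_add h₁ h₂)
  have hint := integrable_cosh_norm_of_ae_norm_le (by fun_prop) hdiff
  have hcenter : Integrable (fun ω => cosh ‖Y ω - ∫ ω', Y ω' ∂μ‖) μ :=
    integrable_cosh_norm_of_ae_norm_le (by fun_prop) (C := C + ‖∫ ω', Y ω' ∂μ‖) <| by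
      filter_upwards [hC] with ω h
      exact (norm_sub_le _ _).trans (by linarith)
  have hsection (ω : Ω) : Integrable (fun ω' => cosh ‖Y ω - Y ω'‖) μ :=
    integrable_cosh_norm_of_ae_norm_le (by fun_prop) (C := ‖Y ω‖ + C) <| by
      filter_upwards [hC] with ω' h
      exact (norm_sub_le _ _).trans (by linarith)
  rw [integral_prod _ hint]
  refine integral_mono hcenter hint.integral_prod_left fun ω => ?_
  have hjensen := convexOn_cosh_norm.map_integral_le (f := fun ω' => Y ω - Y ω')
    (continuous_cosh.comp continuous_norm).continuousOn isClosed_univ (by simp)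
    ((integrable_const (Y ω)).sub hYint) (hsection ω)
  simpa [integral_sub (integrable_const _) hYint] using hjensen

lemma measure_ge_le_integral_cosh_mul_div {Ω : Type*} [MeasurableSpace Ω] {μ : Measure Ω}
    [IsFiniteMeasure μ] {Z : Ω → ℝ} {lam t : ℝ} (hlam : 0 ≤ lam) (ht : 0 ≤ t)
    (hint : Integrable (fun ω => cosh (lam * Z ω)) μ) :
    μ {ω | t ≤ Z ω} ≤ ENNReal.ofReal ((∫ ω, cosh (lam * Z ω) ∂μ) / cosh (lam * t)) := by
  have hmarkov := mul_meas_ge_le_integral_of_nonneg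
    (ae_of_all _ fun ω => (cosh_pos (lam * Z ω)).le) hint (cosh (lam * t))
  calc μ {ω | t ≤ Z ω} ≤ μ {ω | cosh (lam * t) ≤ cosh (lam * Z ω)} := by
        refine measure_mono fun ω (hω : t ≤ Z ω) => cosh_le_cosh.2 ?_
        exact abs_le_abs_of_nonneg (by positivity) (mul_le_mul_of_nonneg_left hω hlam)
    _ = ENNReal.ofReal (μ.real {ω | cosh (lam * t) ≤ cosh (lam * Z ω)}) :=
        (ofReal_measureReal).symm
    _ ≤ _ := by
        gcongr
        rw [le_div_iff₀ (cosh_pos _), mul_comm]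
        exact hmarkov

lemma cosh_pow_div_cosh_le (N : ℕ) (a s : ℝ) :
    cosh a ^ N / cosh s ≤ 2 * exp (N * a ^ 2 / 2 - s) := by
  have hnum : cosh a ^ N ≤ exp (N * a ^ 2 / 2) := by
    calc cosh a ^ N ≤ exp (a ^ 2 / 2) ^ N := by gcongr; exact cosh_le_exp_half_sq a
      _ = exp (N * a ^ 2 / 2) := by rw [← exp_nat_mul]; ring_nf
  have hden : exp s / 2 ≤ cosh s := by
    rw [cosh_eq]
    linarith [exp_pos (-s)]
  calc cosh a ^ N / cosh s ≤ exp (N * a ^ 2 / 2) / (exp s / 2) :=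
        div_le_div₀ (exp_pos _).le hnum (by positivity) hden
    _ = 2 * exp (N * a ^ 2 / 2 - s) := by rw [exp_sub]; ring

lemma ae_norm_sum_sub_integral_le {E : Type*} [NormedAddCommGroup E] [NormedSpace ℝ E]
    {Ω : Type*} [MeasurableSpace Ω] {μ : Measure Ω} [IsProbabilityMeasure μ] {ι : Type*}
    [Fintype ι] {ξ : ι → Ω → E} {M : ℝ} (hbound : ∀ i, ∀ᵐ ω ∂μ, ‖ξ i ω‖ ≤ M) :
    ∀ᵐ ω ∂μ, ‖∑ i, (ξ i ω - ∫ ω', ξ i ω' ∂μ)‖ ≤ ∑ _i : ι, (M + M) := by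
  filter_upwards [ae_all_iff.2 hbound] with ω hω
  refine (norm_sum_le _ _).trans (Finset.sum_le_sum fun i _ =>
    (norm_sub_le _ _).trans (add_le_add (hω i) ?_))
  simpa using norm_integral_le_of_norm_le_const (hbound i)

section Hoeffding

variable {E : Type*} [NormedAddCommGroup E] [InnerProductSpace ℝ E] [CompleteSpace E]
  [SecondCountableTopology E] [MeasurableSpace E] [BorelSpace E]
  {Ω : Type*} [MeasurableSpace Ω] {μ : Measure Ω} [IsProbabilityMeasure μ]
  {ι : Type*} [Fintype ι] {ξ : ι → Ω → E}

lemma integral_cosh_norm_sum_sub_integral_le (hmeas : ∀ i, Measurable (ξ i))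
    (hindep : iIndepFun ξ μ) {M : ℝ} (hbound : ∀ i, ∀ᵐ ω ∂μ, ‖ξ i ω‖ ≤ M) :
    ∫ ω, cosh ‖∑ i, (ξ i ω - ∫ ω', ξ i ω' ∂μ)‖ ∂μ ≤ cosh (2 * M) ^ Fintype.card ι := by
  set D : ι → Ω × Ω → E := fun i p => ξ i p.1 - ξ i p.2
  have hD (i : ι) : Measurable (D i) := by fun_prop
  have hDindep : iIndepFun D (μ.prod μ) :=
    (hindep.prod hindep hmeas hmeas).comp (fun _ q => q.1 - q.2)
      fun _ => measurable_fst.sub measurable_snd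
  have hDsymm (i : ι) : (μ.prod μ).map (-D i) = (μ.prod μ).map (D i) := by
    have hswap : -D i = D i ∘ Prod.swap := by ext p; simp [D]
    rw [hswap, ← Measure.map_map (hD i) measurable_swap, Measure.measurePreserving_swap.map_eq]
  have hDbound (i : ι) : ∀ᵐ p ∂μ.prod μ, ‖D i p‖ ≤ 2 * M := by
    filter_upwards [Measure.quasiMeasurePreserving_fst.ae (hbound i),
      Measure.quasiMeasurePreserving_snd.ae (hbound i)] with p h₁ h₂
    exact (norm_sub_le _ _).trans (by linarith)
  have hsum : ∀ᵐ ω ∂μ, ‖∑ i, ξ i ω‖ ≤ ∑ _i : ι, M := by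
    filter_upwards [ae_all_iff.2 hbound] with ω hω
    exact (norm_sum_le _ _).trans (Finset.sum_le_sum fun i _ => hω i)
  have hmean : ∫ ω, ∑ i, ξ i ω ∂μ = ∑ i, ∫ ω, ξ i ω ∂μ :=
    integral_finsetSum _ fun i _ => .of_bound (hmeas i).aestronglyMeasurable M (hbound i)
  calc ∫ ω, cosh ‖∑ i, (ξ i ω - ∫ ω', ξ i ω' ∂μ)‖ ∂μ
      = ∫ ω, cosh ‖∑ i, ξ i ω - ∫ ω', ∑ i, ξ i ω' ∂μ‖ ∂μ := by
        simp only [Finset.sum_sub_distrib, hmean]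
    _ ≤ ∫ p, cosh ‖∑ i, ξ i p.1 - ∑ i, ξ i p.2‖ ∂μ.prod μ :=
        integral_cosh_norm_sub_integral_le (by fun_prop) hsum
    _ = ∫ p, cosh ‖∑ i, D i p‖ ∂μ.prod μ := by simp only [D, Finset.sum_sub_distrib]
    _ ≤ ∏ _i : ι, cosh (2 * M) :=
        integral_cosh_norm_sum_le hD hDindep hDsymm hDbound Finset.univ
    _ = cosh (2 * M) ^ Fintype.card ι := by rw [Finset.prod_const, Finset.card_univ]

theorem measure_le_norm_sum_sub_integral_le (hmeas : ∀ i, Measurable (ξ i))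
    (hindep : iIndepFun ξ μ) {M : ℝ} (hM : 0 < M) (hbound : ∀ i, ∀ᵐ ω ∂μ, ‖ξ i ω‖ ≤ M)
    {t : ℝ} (ht : 0 ≤ t) :
    μ {ω | t ≤ ‖∑ i, (ξ i ω - ∫ ω', ξ i ω' ∂μ)‖} ≤
      ENNReal.ofReal (2 * exp (-t ^ 2 / (8 * Fintype.card ι * M ^ 2))) := by
  set N := Fintype.card ι
  set Z : Ω → E := fun ω => ∑ i, (ξ i ω - ∫ ω', ξ i ω' ∂μ)
  set lam := t / (4 * N * M ^ 2)
  have hlam : 0 ≤ lam := by positivity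
  have hmoment : ∫ ω, cosh (lam * ‖Z ω‖) ∂μ ≤ cosh (2 * (lam * M)) ^ N := by
    have := integral_cosh_norm_sum_sub_integral_le (ξ := fun i ω => lam • ξ i ω)
      (fun i => (hmeas i).const_smul lam) (hindep.comp _ fun _ => measurable_const_smul lam)
      (M := lam * M) fun i => by
        filter_upwards [hbound i] with ω h
        rw [norm_smul, norm_of_nonneg hlam]
        exact mul_le_mul_of_nonneg_left h hlam
    simpa only [integral_smul, ← smul_sub, ← Finset.smul_sum, norm_smul, norm_of_nonneg hlam]
      using this
  have hint : Integrable (fun ω => cosh (lam * ‖Z ω‖)) μ := by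
    have hZ : ∀ᵐ ω ∂μ, ‖lam • Z ω‖ ≤ lam * ∑ _i : ι, (M + M) := by
      filter_upwards [ae_norm_sum_sub_integral_le hbound] with ω h
      rw [norm_smul, norm_of_nonneg hlam]
      exact mul_le_mul_of_nonneg_left h hlam
    simpa only [norm_smul, norm_of_nonneg hlam] using
      integrable_cosh_norm_of_ae_norm_le (by fun_prop) hZ
  have hexponent : N * (2 * (lam * M)) ^ 2 / 2 - lam * t = -t ^ 2 / (8 * N * M ^ 2) := by
    rcases Nat.eq_zero_or_pos N with hN | hN
    · -- both sides vanish, `lam` being `t / 0 = 0`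
      simp [lam, hN]
    · simp only [lam]
      field_simp
      ring
  calc μ {ω | t ≤ ‖Z ω‖}
      ≤ ENNReal.ofReal ((∫ ω, cosh (lam * ‖Z ω‖) ∂μ) / cosh (lam * t)) :=
        measure_ge_le_integral_cosh_mul_div hlam ht hint
    _ ≤ ENNReal.ofReal (cosh (2 * (lam * M)) ^ N / cosh (lam * t)) := by gcongr
    _ ≤ ENNReal.ofReal (2 * exp (-t ^ 2 / (8 * N * M ^ 2))) := by
        rw [← hexponent]
        gcongr
        exact cosh_pow_div_cosh_le N _ _

end Hoeffding

theorem hilbert_hoeffding_general {H : Type*} [NormedAddCommGroup H]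
    [InnerProductSpace ℝ H] [CompleteSpace H] [SecondCountableTopology H]
    [MeasurableSpace H] [BorelSpace H] {Ω : Type*} [MeasurableSpace Ω]
    (μ : Measure Ω) [IsProbabilityMeasure μ] (n : ℕ) (hn : 0 < n)
    (ξ : Fin n → Ω → H) (hmeas : ∀ i, Measurable (ξ i))
    (hindep : iIndepFun ξ μ)
    (hident : ∀ i j, IdentDistrib (ξ i) (ξ j) μ μ)
    (M : ℝ) (hM : 0 < M)
    (hbound : ∀ i, ∀ᵐ ω ∂μ, ‖ξ i ω‖ ≤ M) (ε : ℝ) (hε : 0 < ε) :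
    μ {ω | ε ≤ ‖(n : ℝ)⁻¹ • ∑ i, ξ i ω - ∫ ω', ξ ⟨0, hn⟩ ω' ∂μ‖} ≤
      ENNReal.ofReal (2 * Real.exp (-(n : ℝ) * ε ^ 2 / (8 * M ^ 2))) := by
  have hn' : (0 : ℝ) < n := Nat.cast_pos.2 hn
  have hevent : {ω | ε ≤ ‖(n : ℝ)⁻¹ • ∑ i, ξ i ω - ∫ ω', ξ ⟨0, hn⟩ ω' ∂μ‖} =
      {ω | n * ε ≤ ‖∑ i, (ξ i ω - ∫ ω', ξ i ω' ∂μ)‖} := by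
    ext ω
    have hsum : ∑ i, (ξ i ω - ∫ ω', ξ i ω' ∂μ) =
        (n : ℝ) • ((n : ℝ)⁻¹ • ∑ i, ξ i ω - ∫ ω', ξ ⟨0, hn⟩ ω' ∂μ) := by
      simp only [Finset.sum_sub_distrib, (hident _ ⟨0, hn⟩).integral_eq, Finset.sum_const,
        Finset.card_univ, Fintype.card_fin, smul_sub, smul_inv_smul₀ hn'.ne',
        Nat.cast_smul_eq_nsmul]
    simp only [Set.mem_ofPred_eq, hsum, norm_smul, Real.norm_natCast,
      mul_le_mul_iff_right₀ hn']
  rw [hevent]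
  convert measure_le_norm_sum_sub_integral_le hmeas hindep hM hbound
    (t := n * ε) (by positivity) using 4
  rw [Fintype.card_fin]
  field_simp

/-- Hoeffding-type concentration for i.i.d. bounded random vectors in a
separable real Hilbert space:
`P(‖(1/n)Σᵢ ξᵢ − E[ξ₁]‖ ≥ ε) ≤ 2 exp(−nε²/(8M²))`. -/
theorem hilbert_hoeffding {H : Type*} [NormedAddCommGroup H]
    [InnerProductSpace ℝ H] [CompleteSpace H] [SecondCountableTopology H]
    [MeasurableSpace H] [BorelSpace H] {Ω : Type*} [MeasurableSpace Ω]
    (μ : Measure Ω) [IsProbabilityMeasure μ] (n : ℕ) (hn : 0 < n)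
    (ξ : Fin n → Ω → H) (hmeas : ∀ i, Measurable (ξ i))
    (hindep : iIndepFun ξ μ)
    (hident : ∀ i j, IdentDistrib (ξ i) (ξ j) μ μ)
    (hint : ∀ i, Integrable (ξ i) μ) (M : ℝ) (hM : 0 < M)
    (hbound : ∀ i, ∀ᵐ ω ∂μ, ‖ξ i ω‖ ≤ M) (ε : ℝ) (hε : 0 < ε) :
    μ {ω | ε ≤ ‖(n : ℝ)⁻¹ • ∑ i, ξ i ω - ∫ ω', ξ ⟨0, hn⟩ ω' ∂μ‖} ≤
      ENNReal.ofReal (2 * Real.exp (-(n : ℝ) * ε ^ 2 / (8 * M ^ 2))) :=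
  hilbert_hoeffding_general μ n hn ξ hmeas hindep hident M hM hbound ε hε
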